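/- Fix n₀ ≥ 2 such that γ₀ := c²γ^{n₀} < 1. Let L > 0 and, for arbitrary k, n ≥ 1, let g_{n,k}: E^{2(k+n)} → ℝ be Lipschitz continuous in each variable with the same Lipschitz constant L. Define H_{n,k}(x) = ∫_E π_1(x, dy_1) ∫_E π_2(y_1, dy_2) ⋯ ∫_E π_{2(k+n)}(y_{2(k+n)−1}, dy_{2(k+n)}) g_{n,k}(y_1,…,y_{2(k+n)}), where π_l(y_{l−1}, ·) = δ_{y_{l−1}} P^{k_l} with k_l ≥ 1 for all l and additionally k_l ≥ n₀ − 1 for all even l. Then H_{n,k} is Lipschitz with Lipschitz constant at most L(cγ+1)/(1−γ₀); in particular the constant depends only on L (and on c, γ, n₀), not on n, k, or the exponents k_l. -/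

import Mathlib

open MeasureTheory ProbabilityTheory Filter Bornology
open scoped ENNReal NNReal Topology

variable {E : Type*} [MeasurableSpace E] [MetricSpace E] [CompleteSpace E]
  [SecondCountableTopology E] [BorelSpace E]

/-- The Markov operator acting on functions: `Pf(x) = ∫ f(y) π(x, dy)`. -/
noncomputable def Pfun (π : Kernel E E) (f : E → ℝ) : E → ℝ := fun x => ∫ y, f y ∂(π x)

/-- The Markov operator acting on measures (the transfer operator `ν ↦ νP`). -/
noncomputable def Pmeas (π : Kernel E E) (ν : MeasureTheory.Measure E) :
    MeasureTheory.Measure E := ν.bind (fun x => π x)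

/-- `ν ∈ M_{1,1}`: a Borel probability measure with finite first moment. -/
def FiniteFirstMoment (ν : MeasureTheory.Measure E) : Prop :=
  IsProbabilityMeasure ν ∧ ∃ x₀ : E, Integrable (fun x => dist x₀ x) ν

/-- The Wasserstein (dual-Lipschitz) distance between two measures. -/
noncomputable def wassDist (ν₁ ν₂ : MeasureTheory.Measure E) : ℝ :=
  sSup {r : ℝ | ∃ f : E → ℝ, LipschitzWith 1 f ∧ r = |∫ x, f x ∂ν₁ - ∫ x, f x ∂ν₂|}

/-- The natural filtration of the coordinate process on `ℕ → E`. -/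
def natFilt : Filtration ℕ (MeasurableSpace.pi : MeasurableSpace (ℕ → E)) :=
  Filtration.natural (fun k (ω : ℕ → E) => ω k)
    (fun k => (measurable_pi_apply k).stronglyMeasurable)

/-- `ℙ` is the law of the Markov chain on `E^ℕ` with transition probability `π` and
initial distribution `ν`. -/
structure IsMarkovChainLaw (π : Kernel E E) (ν : MeasureTheory.Measure E)
    (P : MeasureTheory.Measure (ℕ → E)) : Prop where
  prob : IsProbabilityMeasure P
  init : P.map (fun ω => ω 0) = ν
  markov : ∀ (n : ℕ) (g : E → ℝ), Measurable g → IsBounded (Set.range g) →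
    P[(fun ω => g (ω (n + 1))) | natFilt n] =ᵐ[P] fun ω => ∫ y, g y ∂(π (ω n))

/-- The corrector function `χ = ∑_{i≥0} Pⁱψ`. -/
noncomputable def chiFun (π : Kernel E E) (ψ : E → ℝ) : E → ℝ :=
  fun x => ∑' i : ℕ, (Pfun π)^[i] ψ x

/-- The martingale `S_n = χ(X_n) - χ(X_0) + ∑_{i=0}^n ψ(X_i)` as a function of the trajectory. -/
noncomputable def SFun (π : Kernel E E) (ψ : E → ℝ) (n : ℕ) : (ℕ → E) → ℝ :=
  fun ω => chiFun π ψ (ω n) - chiFun π ψ (ω 0) + ∑ i ∈ Finset.range (n + 1), ψ (ω i)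

/-- The martingale differences `Z_n = χ(X_n) - χ(X_{n-1}) + ψ(X_n)`. -/
noncomputable def ZFun (π : Kernel E E) (ψ : E → ℝ) (n : ℕ) : (ℕ → E) → ℝ :=
  fun ω => chiFun π ψ (ω n) - chiFun π ψ (ω (n - 1)) + ψ (ω n)

/-- The `k`-fold composition `P^k` of the transition kernel (with `P^0 = id`). -/
noncomputable def kpow (π : Kernel E E) : ℕ → Kernel E E
  | 0 => Kernel.id
  | n + 1 => (kpow π n) ∘ₖ π

/-- The iterated integral `∫ κ₀(x, dy₁) ∫ κ₁(y₁, dy₂) ⋯ ∫ κ_{m-1}(y_{m-1}, dy_m) g(y₁,…,y_m)`. -/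
noncomputable def iterIntegral (κ : ℕ → Kernel E E) :
    (m : ℕ) → ((Fin m → E) → ℝ) → E → ℝ
  | 0, g, _ => g Fin.elim0
  | m + 1, g, x =>
      ∫ y, iterIntegral (fun j => κ (j + 1)) m (fun ys => g (Fin.cons y ys)) y ∂(κ 0 x)

/-!
By (H2) applied to Dirac masses, `x ↦ ∫ f(y) P^m(x, dy)` is `cγ^m K`-Lipschitz whenever `f` is
`K`-Lipschitz. Peeling off the first integral, `H(x) = ∫ G(y, y) π_1(x, dy)` where `G(y, ·)` is the
iterated integral of `g(y, ·)` along the remaining kernels; `y ↦ G(y, y)` is `L(1 + A')`-Lipschitz,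
`A'` being the constant of the remaining integrals. Hence `Lip H ≤ L A` with
`A = a_1 (1 + a_2 (1 + ⋯ (1 + a_{2(k+n)})))` and `a_l = cγ^{k_l}`. Consecutive factors multiply to
at most `cγ · cγ^{n₀-1} = γ₀ < 1`, so two steps of the recursion keep `A` below their fixed point
`(1 + cγ)/(1 - γ₀)`.
-/

def chainLipConst (a : ℕ → ℝ≥0) : ℕ → ℝ≥0
  | 0 => 0
  | m + 1 => a 0 * (1 + chainLipConst (fun j => a (j + 1)) m)

theorem chainLipConst_le {p q r : ℝ} (hp : 0 ≤ p) (hr : r ∈ Set.Ico (0 : ℝ) 1) (hpq : p * q ≤ r)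
    (m : ℕ) (a : ℕ → ℝ≥0) (heven : ∀ j < m, j % 2 = 0 → (a j : ℝ) ≤ p)
    (hodd : ∀ j < m, j % 2 = 1 → (a j : ℝ) ≤ q) :
    (chainLipConst a m : ℝ) ≤ (1 + p) / (1 - r) := by
  obtain ⟨hr₀, hr₁⟩ := hr
  set B := (1 + p) / (1 - r)
  have hB : B = 1 + p + r * B := by
    simp only [B]
    field_simp
    ring
  have hB₀ : 0 ≤ B := by positivity
  induction m using Nat.twoStepInduction generalizing a with
  | zero => simpa [chainLipConst]
  | one =>
    have h₀ := heven 0 one_pos rfl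
    simp only [chainLipConst, add_zero, mul_one]
    nlinarith [mul_nonneg hr₀ hB₀]
  | more m ih _ =>
    have hA := ih (fun j => a (j + 2)) (fun j hj hj₂ => heven (j + 2) (by omega) (by omega))
      (fun j hj hj₂ => hodd (j + 2) (by omega) (by omega))
    have h₀ := heven 0 (by omega) rfl
    have h₁ := hodd 1 (by omega) rfl
    have hstep : (chainLipConst a (m + 2) : ℝ) =
        a 0 * (1 + a 1 * (1 + chainLipConst (fun j => a (j + 2)) m)) := by
      simp [chainLipConst]
    have hA₁ : (a 1 : ℝ) * (1 + chainLipConst (fun j => a (j + 2)) m) ≤ q * (1 + B) :=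
      (mul_le_mul_of_nonneg_left (by linarith) (a 1).2).trans
        (mul_le_mul_of_nonneg_right h₁ (by linarith))
    rw [hstep]
    calc _ ≤ p * (1 + q * (1 + B)) := mul_le_mul h₀ (by linarith) (by positivity) hp
      _ ≤ B := by nlinarith [mul_le_mul_of_nonneg_right hpq hB₀]

section

variable {X : Type*} [MeasurableSpace X]

theorem iterate_Pmeas_eq_bind_kpow (π : Kernel X X) (m : ℕ) (ν : Measure X) :
    (Pmeas π)^[m] ν = ν.bind (kpow π m) := by
  induction m generalizing ν with
  | zero => simp [kpow]
  | succ m ih =>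
    rw [Function.iterate_succ_apply, ih, Pmeas, Measure.bind_bind (Kernel.measurable _).aemeasurable
      (Kernel.measurable _).aemeasurable, kpow]
    rfl

theorem kpow_apply (π : Kernel X X) (m : ℕ) (x : X) :
    kpow π m x = (Pmeas π)^[m] (Measure.dirac x) := by
  rw [iterate_Pmeas_eq_bind_kpow, Measure.dirac_bind (Kernel.measurable _)]

end

section

variable {X : Type*} [MeasurableSpace X] [MetricSpace X]

theorem FiniteFirstMoment.iterate_Pmeas {π : Kernel X X}
    (hH1 : ∀ ν : Measure X, FiniteFirstMoment ν → FiniteFirstMoment (Pmeas π ν))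
    (m : ℕ) {ν : Measure X} (hν : FiniteFirstMoment ν) : FiniteFirstMoment ((Pmeas π)^[m] ν) :=
  Function.Iterate.rec _ hν hH1 m

variable [BorelSpace X]

theorem FiniteFirstMoment.dirac (x : X) : FiniteFirstMoment (Measure.dirac x) :=
  ⟨inferInstance, x, integrable_dirac (by simp)⟩

theorem FiniteFirstMoment.kpow {π : Kernel X X}
    (hH1 : ∀ ν : Measure X, FiniteFirstMoment ν → FiniteFirstMoment (Pmeas π ν))
    (m : ℕ) (x : X) : FiniteFirstMoment (kpow π m x) := by
  rw [kpow_apply]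
  exact .iterate_Pmeas hH1 m (.dirac x)

theorem FiniteFirstMoment.integrable_of_lipschitzWith {ν : Measure X} (hν : FiniteFirstMoment ν)
    {K : ℝ≥0} {f : X → ℝ} (hf : LipschitzWith K f) : Integrable f ν := by
  obtain ⟨hprob, x₀, hx₀⟩ := hν
  refine ((integrable_const |f x₀|).add (hx₀.const_mul K)).mono'
    hf.continuous.aestronglyMeasurable (Eventually.of_forall fun y => ?_)
  have hy := hf.dist_le_mul y x₀
  rw [Real.dist_eq, dist_comm y] at hy
  rw [Real.norm_eq_abs]
  calc |f y| ≤ |f x₀| + |f y - f x₀| := by simpa using abs_add_le (f x₀) (f y - f x₀)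
    _ ≤ |f x₀| + K * dist x₀ y := by linarith

theorem bddAbove_wassDist_set {ν₁ ν₂ : Measure X} (h₁ : FiniteFirstMoment ν₁)
    (h₂ : FiniteFirstMoment ν₂) :
    BddAbove {r : ℝ | ∃ f : X → ℝ, LipschitzWith 1 f ∧ r = |∫ x, f x ∂ν₁ - ∫ x, f x ∂ν₂|} := by
  obtain ⟨x₀, -⟩ := h₁.2
  refine ⟨(∫ x, dist x x₀ ∂ν₁) + ∫ x, dist x x₀ ∂ν₂, ?_⟩
  rintro r ⟨f, hf, rfl⟩
  have hdev : ∀ {ν : Measure X}, FiniteFirstMoment ν →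
      |(∫ x, f x ∂ν) - f x₀| ≤ ∫ x, dist x x₀ ∂ν := fun {ν} hν => by
    have := hν.1
    have hcentre : ∫ x, (f x - f x₀) ∂ν = (∫ x, f x ∂ν) - f x₀ := by
      simp [integral_sub (hν.integrable_of_lipschitzWith hf) (integrable_const _)]
    rw [← Real.norm_eq_abs, ← hcentre]
    refine norm_integral_le_of_norm_le (hν.integrable_of_lipschitzWith (.dist_left x₀))
      (Eventually.of_forall fun x => ?_)
    simpa [Real.dist_eq] using hf.dist_le_mul x x₀
  calc |(∫ x, f x ∂ν₁) - ∫ x, f x ∂ν₂|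
      ≤ |(∫ x, f x ∂ν₁) - f x₀| + |f x₀ - ∫ x, f x ∂ν₂| := abs_sub_le _ _ _
    _ ≤ _ := by rw [abs_sub_comm (f x₀)]; exact add_le_add (hdev h₁) (hdev h₂)

theorem abs_integral_sub_le_mul_wassDist {ν₁ ν₂ : Measure X} (h₁ : FiniteFirstMoment ν₁)
    (h₂ : FiniteFirstMoment ν₂) {K : ℝ≥0} {f : X → ℝ} (hf : LipschitzWith K f) :
    |(∫ x, f x ∂ν₁) - ∫ x, f x ∂ν₂| ≤ K * wassDist ν₁ ν₂ := by
  obtain rfl | hK := eq_or_ne K 0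
  · obtain ⟨x₀, -⟩ := h₁.2
    obtain ⟨b, rfl⟩ : ∃ b, f = fun _ => b :=
      ⟨f x₀, funext fun x => (LipschitzWith.zero_iff f).1 hf x x₀⟩
    have := h₁.1
    have := h₂.1
    simp
  · have hf₁ : LipschitzWith 1 fun x => (K : ℝ)⁻¹ * f x := by
      simpa [hK, Function.comp_def] using (lipschitzWith_smul ((K : ℝ)⁻¹)).comp hf
    have hle : _ ≤ wassDist ν₁ ν₂ := le_csSup (bddAbove_wassDist_set h₁ h₂) ⟨_, hf₁, rfl⟩
    rw [integral_const_mul, integral_const_mul, ← mul_sub, abs_mul, abs_inv, NNReal.abs_eq] at hle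
    rwa [inv_mul_le_iff₀ (by positivity)] at hle

theorem wassDist_dirac_le (x y : X) : wassDist (Measure.dirac x) (Measure.dirac y) ≤ dist x y :=
  Real.sSup_le (fun _ ⟨f, hf, hr⟩ => by simpa [hr, Real.dist_eq] using hf.dist_le_mul x y)
    dist_nonneg

def IntegralLipschitzWith (κ : Kernel X X) (a : ℝ≥0) : Prop :=
  ∀ (K : ℝ≥0) (f : X → ℝ), LipschitzWith K f → LipschitzWith (a * K) fun x => ∫ y, f y ∂κ x

theorem integralLipschitzWith_kpow {π : Kernel X X} {γ c : ℝ} (hγ : 0 ≤ γ) (hc : 0 ≤ c)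
    (hH1 : ∀ ν : Measure X, FiniteFirstMoment ν → FiniteFirstMoment (Pmeas π ν))
    (hH2 : ∀ n : ℕ, 1 ≤ n → ∀ ν₁ ν₂ : Measure X, FiniteFirstMoment ν₁ → FiniteFirstMoment ν₂ →
      wassDist ((Pmeas π)^[n] ν₁) ((Pmeas π)^[n] ν₂) ≤ c * γ ^ n * wassDist ν₁ ν₂)
    {m : ℕ} (hm : 1 ≤ m) : IntegralLipschitzWith (kpow π m) (c * γ ^ m).toNNReal := by
  intro K f hf
  refine LipschitzWith.of_dist_le_mul fun x y => ?_
  have hW : wassDist (kpow π m x) (kpow π m y) ≤ c * γ ^ m * dist x y := by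
    rw [kpow_apply, kpow_apply]
    exact (hH2 m hm _ _ (.dirac x) (.dirac y)).trans
      (mul_le_mul_of_nonneg_left (wassDist_dirac_le x y) (by positivity))
  rw [Real.dist_eq, NNReal.coe_mul, Real.coe_toNNReal _ (by positivity)]
  calc _ ≤ K * wassDist (kpow π m x) (kpow π m y) :=
        abs_integral_sub_le_mul_wassDist (.kpow hH1 m x) (.kpow hH1 m y) hf
    _ ≤ K * (c * γ ^ m * dist x y) := by gcongr
    _ = _ := by ring

end

section

variable {X : Type*} [PseudoMetricSpace X]

def CoordwiseLipschitzWith {m : ℕ} (L : ℝ≥0) (g : (Fin m → X) → ℝ) : Prop :=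
  ∀ (j : Fin m) (y : Fin m → X), LipschitzWith L fun z => g (Function.update y j z)

theorem CoordwiseLipschitzWith.cons {L : ℝ≥0} {m : ℕ} {g : (Fin (m + 1) → X) → ℝ}
    (hg : CoordwiseLipschitzWith L g) (y : X) :
    CoordwiseLipschitzWith L fun ys => g (Fin.cons y ys) := fun j w => by
  simpa only [Fin.cons_update] using hg j.succ (Fin.cons y w)

theorem CoordwiseLipschitzWith.abs_sub_cons_le {L : ℝ≥0} {m : ℕ} {g : (Fin (m + 1) → X) → ℝ}
    (hg : CoordwiseLipschitzWith L g) (y y' : X) (w : Fin m → X) :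
    |g (Fin.cons y w) - g (Fin.cons y' w)| ≤ L * dist y y' := by
  simpa only [Fin.update_cons_zero, Real.dist_eq] using (hg 0 (Fin.cons y' w)).dist_le_mul y y'

end

section

variable {X : Type*} [MeasurableSpace X] [MetricSpace X] [BorelSpace X]

-- Stability in `g` and the Lipschitz bound are proved together: at each level the Lipschitz
-- bound needs stability one level down, and stability needs the Lipschitz bound for integrability.
theorem abs_iterIntegral_sub_le {L : ℝ≥0} {m : ℕ} {κ : ℕ → Kernel X X} {a : ℕ → ℝ≥0}
    (hκ : ∀ j x, FiniteFirstMoment (κ j x)) (ha : ∀ j < m, IntegralLipschitzWith (κ j) (a j))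
    {g g' : (Fin m → X) → ℝ} (hg : CoordwiseLipschitzWith L g)
    (hg' : CoordwiseLipschitzWith L g') {ε : ℝ} (hε : ∀ w, |g w - g' w| ≤ ε) (x x' : X) :
    |iterIntegral κ m g x - iterIntegral κ m g' x'| ≤ ε + L * chainLipConst a m * dist x x' := by
  induction m generalizing κ a ε x x' with
  | zero => simpa [iterIntegral, chainLipConst] using hε Fin.elim0
  | succ m ih =>
    set A := chainLipConst (fun j => a (j + 1)) m
    set G : ((Fin (m + 1) → X) → ℝ) → X → ℝ :=
      fun h y => iterIntegral (fun j => κ (j + 1)) m (fun ys => h (Fin.cons y ys)) y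
    have ih' := @ih (fun j => κ (j + 1)) (fun j => a (j + 1)) (fun j => hκ _)
      (fun j hj => ha _ (by omega))
    have hG : ∀ h, CoordwiseLipschitzWith L h → LipschitzWith (L * (1 + A)) (G h) := by
      intro h hh
      refine LipschitzWith.of_dist_le_mul fun y y' => ?_
      have := ih' (hh.cons y) (hh.cons y') (hh.abs_sub_cons_le y y') y y'
      rw [Real.dist_eq]
      push_cast
      linarith
    have hGg : ∀ y, |G g y - G g' y| ≤ ε := fun y => by
      simpa using ih' (hg.cons y) (hg'.cons y) (fun w => hε _) y y
    have hint := fun h hh x => (hκ 0 x).integrable_of_lipschitzWith (hG h hh)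
    have := (hκ 0 x).1
    calc |∫ y, G g y ∂κ 0 x - ∫ y, G g' y ∂κ 0 x'|
        ≤ |∫ y, G g y ∂κ 0 x - ∫ y, G g' y ∂κ 0 x| + |∫ y, G g' y ∂κ 0 x - ∫ y, G g' y ∂κ 0 x'| :=
          abs_sub_le _ _ _
      _ ≤ ε + a 0 * (L * (1 + A)) * dist x x' := by
          gcongr
          · rw [← integral_sub (hint g hg x) (hint g' hg' x)]
            simpa using norm_integral_le_of_norm_le_const (μ := κ 0 x)
              (f := fun y => G g y - G g' y) (Eventually.of_forall hGg)
          · simpa [Real.dist_eq] using (ha 0 (by omega) _ _ (hG g' hg')).dist_le_mul x x'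
      _ = _ := by simp only [chainLipConst, A]; push_cast; ring

theorem lipschitzWith_iterIntegral {L : ℝ≥0} {m : ℕ} {κ : ℕ → Kernel X X} {a : ℕ → ℝ≥0}
    (hκ : ∀ j x, FiniteFirstMoment (κ j x)) (ha : ∀ j < m, IntegralLipschitzWith (κ j) (a j))
    {g : (Fin m → X) → ℝ} (hg : CoordwiseLipschitzWith L g) :
    LipschitzWith (L * chainLipConst a m) (iterIntegral κ m g) :=
  LipschitzWith.of_dist_le_mul fun x x' => by
    simpa [Real.dist_eq] using abs_iterIntegral_sub_le hκ ha hg hg (ε := 0) (fun w => by simp) x x'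

end

theorem lemma1_iterated_integral_lipschitz_general
    {E : Type*} [MeasurableSpace E] [MetricSpace E]
    [BorelSpace E]
    (π : Kernel E E) (γ c : ℝ) (hγ : γ ∈ Set.Ioo (0 : ℝ) 1) (hc : 0 < c)
    -- (H1): `P` preserves `M_{1,1}`
    (hH1 : ∀ ν : MeasureTheory.Measure E, FiniteFirstMoment ν → FiniteFirstMoment (Pmeas π ν))
    -- (H2): spectral gap in the Wasserstein metric
    (hH2 : ∀ n : ℕ, 1 ≤ n → ∀ ν₁ ν₂ : MeasureTheory.Measure E, FiniteFirstMoment ν₁ →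
      FiniteFirstMoment ν₂ →
      wassDist ((Pmeas π)^[n] ν₁) ((Pmeas π)^[n] ν₂) ≤ c * γ ^ n * wassDist ν₁ ν₂)
    -- `n₀ ≥ 2` with `γ₀ = c²γ^{n₀} < 1`
    (n₀ : ℕ) (hγ₀ : c ^ 2 * γ ^ n₀ < 1)
    (L : ℝ≥0) (n k : ℕ)
    -- `g_{n,k}` is Lipschitz in each variable with the same constant `L`
    (g : (Fin (2 * (k + n)) → E) → ℝ)
    (hg : ∀ (j : Fin (2 * (k + n))) (y : Fin (2 * (k + n)) → E),
      LipschitzWith L (fun z => g (Function.update y j z)))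
    -- the exponents `k_l`, `l = 1, …, 2(k+n)` (1-based)
    (kl : ℕ → ℕ) (hkl : ∀ l : ℕ, 1 ≤ l → l ≤ 2 * (k + n) → 1 ≤ kl l)
    (hklEven : ∀ l : ℕ, 1 ≤ l → l ≤ 2 * (k + n) → l % 2 = 0 → n₀ - 1 ≤ kl l) :
    LipschitzWith (Real.toNNReal ((L : ℝ) * (c * γ + 1) / (1 - c ^ 2 * γ ^ n₀)))
      (iterIntegral (fun j => kpow π (kl (j + 1))) (2 * (k + n)) g) := by
  obtain ⟨hγ0, hγ1⟩ := hγ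
  set a : ℕ → ℝ≥0 := fun j => (c * γ ^ kl (j + 1)).toNNReal
  have hlip := lipschitzWith_iterIntegral (a := a) (fun j x => .kpow hH1 _ x)
    (fun j _ => integralLipschitzWith_kpow hγ0.le hc.le hH1 hH2 (hkl _ (by omega) (by omega))) hg
  have ha : ∀ j, ∀ e ≤ kl (j + 1), (a j : ℝ) ≤ c * γ ^ e := fun j e he => by
    rw [Real.coe_toNNReal _ (by positivity)]
    exact mul_le_mul_of_nonneg_left (pow_le_pow_of_le_one hγ0.le hγ1.le he) hc.le
  have hpq : c * γ * (c * γ ^ (n₀ - 1)) ≤ c ^ 2 * γ ^ n₀ := by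
    have := pow_le_pow_of_le_one hγ0.le hγ1.le (show n₀ ≤ n₀ - 1 + 1 by omega)
    rw [pow_succ] at this
    nlinarith [sq_nonneg c]
  have hA := chainLipConst_le (by positivity) ⟨by positivity, hγ₀⟩ hpq (2 * (k + n)) a
    (fun j _ _ => by simpa using ha j 1 (hkl (j + 1) (by omega) (by omega)))
    (fun j _ _ => ha j _ (hklEven (j + 1) (by omega) (by omega) (by omega)))
  refine hlip.weaken ?_
  rw [Real.le_toNNReal_iff_coe_le (by have := sub_pos.2 hγ₀; positivity), NNReal.coe_mul,
    mul_div_assoc, add_comm (c * γ)]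
  gcongr

/-- Lemma 1: the iterated integral `H_{n,k}` of a function which is Lipschitz in each variable
with constant `L`, along kernels `π_l = P^{k_l}` with `k_l ≥ 1` and `k_l ≥ n₀ - 1` for even `l`,
is Lipschitz with the constant `L(cγ+1)/(1-γ₀)`, `γ₀ = c²γ^{n₀}`, independent of `n`, `k`
and the exponents `k_l`. -/
theorem lemma1_iterated_integral_lipschitz
    {E : Type*} [MeasurableSpace E] [MetricSpace E] [CompleteSpace E]
    [SecondCountableTopology E] [BorelSpace E]
    (π : Kernel E E) [IsMarkovKernel π] (γ c : ℝ) (hγ : γ ∈ Set.Ioo (0 : ℝ) 1) (hc : 0 < c)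
    -- (H1): `P` preserves `M_{1,1}`
    (hH1 : ∀ ν : MeasureTheory.Measure E, FiniteFirstMoment ν → FiniteFirstMoment (Pmeas π ν))
    -- (H2): spectral gap in the Wasserstein metric
    (hH2 : ∀ n : ℕ, 1 ≤ n → ∀ ν₁ ν₂ : MeasureTheory.Measure E, FiniteFirstMoment ν₁ →
      FiniteFirstMoment ν₂ →
      wassDist ((Pmeas π)^[n] ν₁) ((Pmeas π)^[n] ν₂) ≤ c * γ ^ n * wassDist ν₁ ν₂)
    -- `n₀ ≥ 2` with `γ₀ = c²γ^{n₀} < 1`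
    (n₀ : ℕ) (hn₀ : 2 ≤ n₀) (hγ₀ : c ^ 2 * γ ^ n₀ < 1)
    (L : ℝ≥0) (hL : 0 < L) (n k : ℕ) (hn : 1 ≤ n) (hk : 1 ≤ k)
    -- `g_{n,k}` is Lipschitz in each variable with the same constant `L`
    (g : (Fin (2 * (k + n)) → E) → ℝ)
    (hg : ∀ (j : Fin (2 * (k + n))) (y : Fin (2 * (k + n)) → E),
      LipschitzWith L (fun z => g (Function.update y j z)))
    -- the exponents `k_l`, `l = 1, …, 2(k+n)` (1-based)
    (kl : ℕ → ℕ) (hkl : ∀ l : ℕ, 1 ≤ l → l ≤ 2 * (k + n) → 1 ≤ kl l)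
    (hklEven : ∀ l : ℕ, 1 ≤ l → l ≤ 2 * (k + n) → l % 2 = 0 → n₀ - 1 ≤ kl l) :
    LipschitzWith (Real.toNNReal ((L : ℝ) * (c * γ + 1) / (1 - c ^ 2 * γ ^ n₀)))
      (iterIntegral (fun j => kpow π (kl (j + 1))) (2 * (k + n)) g) :=
  lemma1_iterated_integral_lipschitz_general π γ c hγ hc hH1 hH2 n₀ hγ₀ L n k g hg kl hkl hklEven
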